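/- arXiv:2111.12679 — 2 statements merged into one kernel-verified Lean document; each statement's English description precedes it below -/
import Mathlib

section
/- Let π be any (possibly history-dependent) randomized procedure that, at each time step at state g, selects action a1 or a2, and in MDP M_i (i = 1, 2) action a_i leads to absorbing success state h with probability p while the other action leads to absorbing failure state q with probability p, and otherwise (with probability 1 - p) the state stays at g. Then the probability that π eventually reaches h in M1 plus the probability that π eventually reaches h in M2 equals 1. -/
/-!
Exit from `g` happens at step `i` after history `w` with probability `(1-p)^i · P(w) · p`,
where `P(w)` is the probability of `w` under `π`. For each `i` these weights `P(w)` over the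
histories of length `i` sum to `1`, so the exit times are geometrically distributed and the
exit probabilities sum to `1`. At each exit the policy plays `a1` with probability `π w`,
which is the exit to `h` in `M1`, and `a2` with probability `1 - π w`, which is the exit to
`h` in `M2`; adding the two gives back the total exit probability.
-/

/-- The probability of a finite action history under a history-dependent randomized
policy `π`, where `π w` is the probability of choosing action `a1` given the (reversed)
history `w` of previous actions (`true` codes `a1`, `false` codes `a2`). Histories are
lists with the most recent action at the head. -/
def histProb (π : List Bool → ℝ) : List Bool → ℝ
  | [] => 1
  | a :: w => histProb π w * (if a then π w else 1 - π w)

open Finset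

theorem List.injective_uncurry_cons (α : Type*) :
    Function.Injective (Function.uncurry (@cons α)) :=
  fun _ _ h => Prod.ext_iff.2 (cons.inj h)

def listsOfLength (α : Type*) [Fintype α] : ℕ → Finset (List α)
  | 0 => {[]}
  | n + 1 => (univ ×ˢ listsOfLength α n).map ⟨_, List.injective_uncurry_cons α⟩

theorem mem_listsOfLength {α : Type*} [Fintype α] {n : ℕ} {w : List α} :
    w ∈ listsOfLength α n ↔ w.length = n := by
  induction n generalizing w with
  | zero => simp [listsOfLength]
  | succ n ih => cases w <;> simp [listsOfLength, ih]

theorem histProb_nonneg {π : List Bool → ℝ} (hπ : ∀ w, π w ∈ Set.Icc (0:ℝ) 1)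
    (w : List Bool) : 0 ≤ histProb π w := by
  induction w with
  | nil => simp [histProb]
  | cons a w ih =>
    cases a <;> simp only [histProb, Bool.false_eq_true, ↓reduceIte]
    · exact mul_nonneg ih (sub_nonneg.2 (hπ w).2)
    · exact mul_nonneg ih (hπ w).1

theorem sum_histProb_listsOfLength (π : List Bool → ℝ) (n : ℕ) :
    ∑ w ∈ listsOfLength Bool n, histProb π w = 1 := by
  induction n with
  | zero => simp [listsOfLength, histProb]
  | succ n ih =>
    simp [listsOfLength, sum_product_right, histProb, ← mul_add, ih]

theorem hasSum_mul_histProb {π : List Bool → ℝ} (hπ : ∀ w, π w ∈ Set.Icc (0:ℝ) 1)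
    {c : ℕ → ℝ} {s : ℝ} (hc0 : ∀ n, 0 ≤ c n) (hc : HasSum c s) :
    HasSum (fun w => c w.length * histProb π w) s := by
  let e : (Σ n, listsOfLength Bool n) ≃ List Bool :=
    (Equiv.sigmaCongrRight fun _ => Equiv.subtypeEquivRight fun _ => mem_listsOfLength).trans
      (Equiv.sigmaFiberEquiv List.length)
  have level (n : ℕ) :
      HasSum (fun w : listsOfLength Bool n => c (w : List Bool).length * histProb π w) (c n) := by
    convert hasSum_fintype _
    rw [sum_coe_sort (listsOfLength Bool n) fun w => c w.length * histProb π w,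
      sum_congr rfl fun w hw => by rw [mem_listsOfLength.1 hw], ← mul_sum,
      sum_histProb_listsOfLength, mul_one]
  rw [← e.hasSum_iff]
  refine HasSum.sigma_of_hasSum hc level ?_
  refine (summable_sigma_of_nonneg fun x => ?_).2 ⟨fun n => (level n).summable, ?_⟩
  · exact mul_nonneg (hc0 _) (histProb_nonneg hπ _)
  · exact hc.summable.congr fun n => (level n).tsum_eq.symm

theorem hasSum_one_sub_pow_mul {p : ℝ} (hp0 : 0 < p) (hp2 : p < 2) :
    HasSum (fun n : ℕ => (1 - p) ^ n * p) 1 := by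
  have h := (hasSum_geometric_of_abs_lt_one (r := 1 - p)
    (abs_lt.2 ⟨by linarith, by linarith⟩)).mul_right p
  rwa [sub_sub_cancel, inv_mul_cancel₀ hp0.ne'] at h

theorem HasSum.tsum_add_tsum_of_nonneg {ι : Type*} {f g : ι → ℝ} {a : ℝ}
    (h : HasSum (fun i => f i + g i) a) (hf : ∀ i, 0 ≤ f i) (hg : ∀ i, 0 ≤ g i) :
    ∑' i, f i + ∑' i, g i = a := by
  have hsf : Summable f :=
    h.summable.of_nonneg_of_le hf fun i => le_add_of_nonneg_right (hg i)
  have hsg : Summable g :=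
    h.summable.of_nonneg_of_le hg fun i => le_add_of_nonneg_left (hf i)
  exact (hsf.hasSum.add hsg.hasSum).unique h

/-- Satisfaction probabilities sum to one: for any (possibly history-dependent)
randomized policy `π` in the mirror MDPs `M1`, `M2` (in `M_i`, while at state `g`,
action `a_i` exits to absorbing success state `h` with probability `p` and the other
action exits to absorbing failure state `q` with probability `p`; otherwise, with
probability `1 - p`, the state remains `g`), the probability of eventually reaching `h`
in `M1` plus the probability of eventually reaching `h` in `M2` equals `1`.
The exit occurs after a history `w` of length `i` with probability
`(1-p)^i · histProb π w · p`, going to `h` in `M1` iff action `a1` is chosen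
(probability `π w`) and in `M2` iff action `a2` is chosen (probability `1 - π w`). -/
theorem stmt9 (p : ℝ) (hp0 : 0 < p) (hp1 : p < 1) (π : List Bool → ℝ)
    (hπ : ∀ w, π w ∈ Set.Icc (0:ℝ) 1) :
    (∑' w : List Bool, (1 - p) ^ w.length * histProb π w * (p * π w)) +
      (∑' w : List Bool, (1 - p) ^ w.length * histProb π w * (p * (1 - π w))) = 1 := by
  have exit_weight_nonneg (w : List Bool) : 0 ≤ (1 - p) ^ w.length * histProb π w :=
    mul_nonneg (pow_nonneg (by linarith) _) (histProb_nonneg hπ w)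
  have hasSum_exit : HasSum (fun w : List Bool => (1 - p) ^ w.length * p * histProb π w) 1 :=
    hasSum_mul_histProb hπ (fun n => mul_nonneg (pow_nonneg (by linarith) n) hp0.le)
      (hasSum_one_sub_pow_mul hp0 (by linarith))
  refine HasSum.tsum_add_tsum_of_nonneg ?_ (fun w => ?_) (fun w => ?_)
  · convert hasSum_exit using 2 with w
    ring
  · exact mul_nonneg (exit_weight_nonneg w) (mul_nonneg hp0.le (hπ w).1)
  · exact mul_nonneg (exit_weight_nonneg w) (mul_nonneg hp0.le (sub_nonneg.2 (hπ w).2))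
end

section
/- Consider a finite directed graph (the transition graph of a deterministic Rabin automaton) in which every vertex has at least one outgoing edge, and cycles are labeled either accepting or rejecting. If from the initial vertex every reachable accepting cycle has no path to any rejecting cycle, then for every infinite path from the initial vertex, the path's acceptance status (whether it eventually enters an accepting cycle) is determined as soon as the path first visits a vertex lying on an accepting cycle; in particular, acceptance is witnessed by a finite prefix of the path. -/
open Relation

lemma reflTransGen_of_path_of_le {V : Type*} {edge : V → V → Prop} {ρ : ℕ → V}
    (hρ : ∀ t, edge (ρ t) (ρ (t + 1))) {a b : ℕ} (hab : a ≤ b) :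
    ReflTransGen edge (ρ a) (ρ b) :=
  (reflTransGen_of_succ_of_le (fun i j => edge (ρ i) (ρ j)) (fun i _ => hρ i) hab).lift ρ
    fun _ _ => id

theorem stmt16_general {V : Type*} (edge : V → V → Prop) (init : V)
    (Acc Rej : Set V)
    (hsep : ∀ a ∈ Acc, Relation.ReflTransGen edge init a →
      ∀ r ∈ Rej, ¬ Relation.ReflTransGen edge a r) :
    ∀ ρ : ℕ → V, ρ 0 = init → (∀ t, edge (ρ t) (ρ (t + 1))) →
      ∀ t, ρ t ∈ Acc →
        (∀ t', t ≤ t' → ρ t' ∉ Rej) ∧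
        (∀ ρ' : ℕ → V, ρ' 0 = init → (∀ s, edge (ρ' s) (ρ' (s + 1))) →
          (∀ k ≤ t, ρ' k = ρ k) → ∃ s, ρ' s ∈ Acc) := by
  intro ρ hρ0 hρ t hAcc
  have hreach : ReflTransGen edge init (ρ t) :=
    hρ0 ▸ reflTransGen_of_path_of_le hρ (Nat.zero_le t)
  refine ⟨fun t' htt' hRej => hsep _ hAcc hreach _ hRej (reflTransGen_of_path_of_le hρ htt'), ?_⟩
  intro ρ' _ _ hprefix
  exact ⟨t, hprefix t le_rfl ▸ hAcc⟩

/-- In a finite directed graph where every vertex has an outgoing edge, with `Acc` the set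
of vertices lying on accepting cycles and `Rej` the set of vertices lying on rejecting
cycles, if no accepting-cycle vertex reachable from the initial vertex has a path to a
rejecting-cycle vertex, then for every infinite path from `init`: once the path visits a
vertex of `Acc`, it never afterwards visits `Rej`, and acceptance (eventually entering an
accepting cycle) is witnessed by the finite prefix up to that visit — every infinite path
from `init` agreeing with it on that prefix also eventually visits `Acc`. -/
theorem stmt16 {V : Type*} [Fintype V] (edge : V → V → Prop) (init : V)
    (Acc Rej : Set V) (hout : ∀ v, ∃ u, edge v u)
    (hsep : ∀ a ∈ Acc, Relation.ReflTransGen edge init a →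
      ∀ r ∈ Rej, ¬ Relation.ReflTransGen edge a r) :
    ∀ ρ : ℕ → V, ρ 0 = init → (∀ t, edge (ρ t) (ρ (t + 1))) →
      ∀ t, ρ t ∈ Acc →
        (∀ t', t ≤ t' → ρ t' ∉ Rej) ∧
        (∀ ρ' : ℕ → V, ρ' 0 = init → (∀ s, edge (ρ' s) (ρ' (s + 1))) →
          (∀ k ≤ t, ρ' k = ρ k) → ∃ s, ρ' s ∈ Acc) :=
  stmt16_general edge init Acc Rej hsep
end
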